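/- arXiv:1805.01560 — 3 statements merged into one kernel-verified Lean document; each statement's English description precedes it below -/
import Mathlib

section
/- Let (X,q) be a T1 asymmetric normed space. If the closed unit ball B_q[0,1] is compact in the topology induced by q, then B_q[0,1] is bounded with respect to the norm q^s(x) = max{q(x), q(−x)}, the topology of q coincides with the norm topology of q^s, and X is finite-dimensional as a vector space. -/
/-!
T1 forces `q` to be definite. Cover the unit ball `B` by finitely many balls `B_q(f, 1/2)`,
`f ∈ F`: for `y ∈ B` some `2 • (y - f)` lies in `B` again, so iterating approximates `y` within
`2⁻ⁿ` by combinations `∑ a_f • f` with coefficients bounded by `2`. As `a ↦ q (y - ∑ a_f • f)` is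
continuous in the coefficients, its minimum over this compact set is `0`, hence `y ∈ span F`
and `X` is finite-dimensional. There `q` is squeezed between multiples of a coordinate norm (the
lower constant is the minimum of `q` on the unit sphere, positive by definiteness), so
`q^s ≤ C q`; this bounds `B` in `q^s` and identifies the two topologies.
-/

open Topology

section

variable {X : Type*} [AddCommGroup X]

def symmetrization (q : X → ℝ) (x : X) : ℝ := max (q x) (q (-x))

abbrev ballTopology (q : X → ℝ) : TopologicalSpace X :=
  TopologicalSpace.generateFrom {s | ∃ (c : X) (ε : ℝ), 0 < ε ∧ s = {y | q (y - c) < ε}}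

theorem isOpen_ball_ballTopology (q : X → ℝ) (c : X) {ε : ℝ} (hε : 0 < ε) :
    IsOpen[ballTopology q] {y | q (y - c) < ε} :=
  TopologicalSpace.isOpen_generateFrom_of_mem ⟨c, ε, hε, rfl⟩

variable [Module ℝ X]

structure IsAsymmSeminorm (q : X → ℝ) : Prop where
  nonneg : ∀ x, 0 ≤ q x
  smul_of_nonneg : ∀ (a : ℝ) x, 0 ≤ a → q (a • x) = a * q x
  add_le : ∀ x y, q (x + y) ≤ q x + q y

namespace IsAsymmSeminorm

variable {q : X → ℝ} (hq : IsAsymmSeminorm q)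
include hq

theorem map_zero : q 0 = 0 := by
  simpa using hq.smul_of_nonneg 0 0 le_rfl

theorem sub_le (x y z : X) : q (x - z) ≤ q (x - y) + q (y - z) := by
  simpa only [sub_add_sub_cancel] using hq.add_le (x - y) (y - z)

theorem smul_le (a : ℝ) (x : X) : q (a • x) ≤ |a| * symmetrization q x := by
  rcases le_or_gt 0 a with ha | ha
  · rw [hq.smul_of_nonneg a x ha, abs_of_nonneg ha]
    exact mul_le_mul_of_nonneg_left (le_max_left _ _) ha
  · rw [← neg_smul_neg, hq.smul_of_nonneg (-a) (-x) (by linarith), abs_of_neg ha]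
    exact mul_le_mul_of_nonneg_left (le_max_right _ _) (by linarith)

end IsAsymmSeminorm

theorem isAsymmSeminorm_symmetrization {q : X → ℝ} (hq : IsAsymmSeminorm q) :
    IsAsymmSeminorm (symmetrization q) where
  nonneg x := (hq.nonneg x).trans (le_max_left _ _)
  smul_of_nonneg a x ha := by
    simp only [symmetrization, ← smul_neg, hq.smul_of_nonneg a _ ha, mul_max_of_nonneg _ _ ha]
  add_le x y := by
    refine max_le ((hq.add_le x y).trans (add_le_add (le_max_left _ _) (le_max_left _ _))) ?_
    rw [neg_add]
    exact (hq.add_le _ _).trans (add_le_add (le_max_right _ _) (le_max_right _ _))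

theorem ballTopology_le_of_le_mul {p₁ p₂ : X → ℝ} (hp₁ : IsAsymmSeminorm p₁)
    (hp₂ : IsAsymmSeminorm p₂) {C : ℝ} (hC : 0 < C) (h : ∀ x, p₁ x ≤ C * p₂ x) :
    ballTopology p₂ ≤ ballTopology p₁ := by
  refine le_generateFrom ?_
  rintro _ ⟨c, ε, -, rfl⟩
  refine @isOpen_iff_forall_mem_open _ (ballTopology p₂) _ |>.2 fun y hy => ?_
  refine ⟨{z | p₂ (z - y) < (ε - p₁ (y - c)) / C}, fun z hz => ?_,
    isOpen_ball_ballTopology p₂ y (div_pos (sub_pos.2 hy) hC), ?_⟩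
  · have hz' : C * p₂ (z - y) < ε - p₁ (y - c) := (lt_div_iff₀' hC).1 hz
    show p₁ (z - c) < ε
    linarith [hp₁.sub_le z y c, h (z - y)]
  · simpa [hp₂.map_zero] using div_pos (sub_pos.2 hy) hC

namespace IsAsymmSeminorm

variable {q : X → ℝ} (hq : IsAsymmSeminorm q)
include hq

theorem eq_zero_of_t1Space [t : TopologicalSpace X] [T1Space X] (ht : t = ballTopology q)
    {x : X} (hx : q x = 0) : x = 0 := by
  refine (specializes_iff_pure.2 ?_).eq
  rw [ht, TopologicalSpace.nhds_generateFrom]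
  refine le_iInf₂ fun s ⟨h0, c, ε, _, hs⟩ => ?_
  subst hs
  rw [Filter.pure_le_principal]
  calc q (x - c) ≤ q (x - 0) + q (0 - c) := hq.sub_le x 0 c
    _ < ε := by rwa [sub_zero, hx, zero_add]

section Coordinates

variable {ι : Type*} [Fintype ι]

theorem exists_le_mul_norm (L : (ι → ℝ) →ₗ[ℝ] X) : ∃ C ≥ 0, ∀ a, q (L a) ≤ C * ‖a‖ := by
  classical
  set v : ι → X := fun i => L fun j => if i = j then 1 else 0
  refine ⟨∑ i, symmetrization q (v i),
    Finset.sum_nonneg fun i _ => (isAsymmSeminorm_symmetrization hq).nonneg _, fun a => ?_⟩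
  calc q (L a) = q (∑ i, a i • v i) := by rw [L.pi_apply_eq_sum_univ a]
    _ ≤ ∑ i, q (a i • v i) :=
      Finset.le_sum_of_subadditive q hq.map_zero.le hq.add_le _ _
    _ ≤ ∑ i, ‖a‖ * symmetrization q (v i) := by
      refine Finset.sum_le_sum fun i _ => (hq.smul_le _ _).trans ?_
      refine mul_le_mul_of_nonneg_right ?_ ((isAsymmSeminorm_symmetrization hq).nonneg _)
      simpa using norm_le_pi_norm a i
    _ = (∑ i, symmetrization q (v i)) * ‖a‖ := by rw [Finset.sum_mul]; simp_rw [mul_comm]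

theorem continuous_sub_linearMap (L : (ι → ℝ) →ₗ[ℝ] X) (y : X) :
    Continuous fun a => q (y - L a) := by
  obtain ⟨C, -, hC⟩ := hq.exists_le_mul_norm L
  refine (LipschitzWith.of_le_add_mul' C fun a b => ?_).continuous
  calc q (y - L a) ≤ q (y - L b) + q (L b - L a) := hq.sub_le _ _ _
    _ ≤ q (y - L b) + C * dist a b := by
      rw [← map_sub, dist_eq_norm']
      exact add_le_add_right (hC _) _

theorem exists_mul_norm_le (hdef : ∀ x, q x = 0 → x = 0) (L : (ι → ℝ) →ₗ[ℝ] X)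
    (hL : Function.Injective L) : ∃ m > 0, ∀ a, m * ‖a‖ ≤ q (L a) := by
  rcases isEmpty_or_nonempty ι with _ | _
  · exact ⟨1, one_pos, fun a => by simpa [Subsingleton.elim a 0] using hq.nonneg _⟩
  have hcont : Continuous fun a => q (L a) := by
    simpa using hq.continuous_sub_linearMap (-L) 0
  obtain ⟨u, hu, hmin⟩ := (isCompact_sphere (0 : ι → ℝ) 1).exists_isMinOn
    (NormedSpace.sphere_nonempty.2 zero_le_one) hcont.continuousOn
  have hu0 : u ≠ 0 := by rintro rfl; simp at hu
  refine ⟨q (L u), (hq.nonneg _).lt_of_ne fun h => hu0 (hL ?_), fun a => ?_⟩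
  · rw [hdef _ h.symm, L.map_zero]
  rcases eq_or_ne a 0 with rfl | ha
  · simpa using hq.nonneg _
  have hna : 0 < ‖a‖ := norm_pos_iff.2 ha
  have hmem : ‖a‖⁻¹ • a ∈ Metric.sphere (0 : ι → ℝ) 1 := by
    simp [norm_smul, hna.ne']
  calc q (L u) * ‖a‖ ≤ q (L (‖a‖⁻¹ • a)) * ‖a‖ := mul_le_mul_of_nonneg_right (hmin hmem) hna.le
    _ = q (L a) := by
      rw [map_smul, hq.smul_of_nonneg _ _ (inv_nonneg.2 hna.le), mul_comm, ← mul_assoc,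
        mul_inv_cancel₀ hna.ne', one_mul]

end Coordinates

theorem exists_symmetrization_le_mul [FiniteDimensional ℝ X] (hdef : ∀ x, q x = 0 → x = 0) :
    ∃ C > 0, ∀ x, symmetrization q x ≤ C * q x := by
  set L := (Module.finBasis ℝ X).equivFun.symm.toLinearMap
  obtain ⟨C, hC0, hC⟩ := hq.exists_le_mul_norm L
  obtain ⟨m, hm, hmL⟩ := hq.exists_mul_norm_le hdef L (LinearEquiv.injective _)
  refine ⟨max 1 (C / m), lt_max_of_lt_left one_pos, fun x => max_le ?_ ?_⟩
  · exact le_mul_of_one_le_left (hq.nonneg x) (le_max_left _ _)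
  obtain ⟨a, rfl⟩ : ∃ a, L a = x := (LinearEquiv.surjective _) x
  calc q (-L a) = q (L (-a)) := by rw [map_neg]
    _ ≤ C * ‖a‖ := by simpa using hC (-a)
    _ = C / m * (m * ‖a‖) := by field_simp
    _ ≤ C / m * q (L a) := by
      gcongr
      exact hmL a
    _ ≤ max 1 (C / m) * q (L a) :=
      mul_le_mul_of_nonneg_right (le_max_right _ _) (hq.nonneg _)

theorem exists_sub_linearCombination_le_of_cover {ι : Type*} [Fintype ι] (c : ι → X)
    (hcover : ∀ y, q y ≤ 1 → ∃ i, q (y - c i) < 1 / 2) (n : ℕ) :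
    ∀ y, q y ≤ 1 → ∃ a : ι → ℝ, ‖a‖ ≤ 2 ∧
      q (y - Fintype.linearCombination ℝ c a) ≤ (1 / 2) ^ n := by
  classical
  induction n with
  | zero =>
    exact fun y hy => ⟨0, by rw [norm_zero]; norm_num,
      by rwa [LinearMap.map_zero, sub_zero, pow_zero]⟩
  | succ n ih =>
    intro y hy
    obtain ⟨i, hi⟩ := hcover y hy
    -- `2 • (y - c i)` is again in the unit ball; approximate it and halve.
    obtain ⟨a, ha, hya⟩ := ih ((2 : ℝ) • (y - c i)) (by
      rw [hq.smul_of_nonneg _ _ zero_le_two]; linarith)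
    refine ⟨Pi.single i 1 + (1 / 2 : ℝ) • a, ?_, ?_⟩
    · calc ‖Pi.single i 1 + (1 / 2 : ℝ) • a‖ ≤ 1 + 1 / 2 * 2 := by
            refine (norm_add_le _ _).trans (add_le_add (by rw [Pi.norm_single, norm_one]) ?_)
            rw [norm_smul, Real.norm_of_nonneg (by norm_num)]
            gcongr
        _ = 2 := by norm_num
    · have hsplit : y - Fintype.linearCombination ℝ c (Pi.single i 1 + (1 / 2 : ℝ) • a) =
          (1 / 2 : ℝ) • ((2 : ℝ) • (y - c i) - Fintype.linearCombination ℝ c a) := by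
        simp only [map_add, map_smul, Fintype.linearCombination_apply_single, one_smul,
          smul_sub, smul_smul]
        norm_num
        abel
      rw [hsplit, hq.smul_of_nonneg _ _ (by norm_num), pow_succ]
      linarith

theorem exists_eq_of_forall_exists_sub_lt {ι : Type*} [Fintype ι]
    (hdef : ∀ x, q x = 0 → x = 0) (L : (ι → ℝ) →ₗ[ℝ] X) {K : Set (ι → ℝ)} (hK : IsCompact K)
    {y : X} (happrox : ∀ ε > 0, ∃ a ∈ K, q (y - L a) < ε) : ∃ a ∈ K, y = L a := by
  obtain ⟨a₀, ha₀, -⟩ := happrox 1 one_pos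
  obtain ⟨a, ha, hmin⟩ :=
    hK.exists_isMinOn ⟨a₀, ha₀⟩ (hq.continuous_sub_linearMap L y).continuousOn
  refine ⟨a, ha, sub_eq_zero.1 (hdef _ (le_antisymm ?_ (hq.nonneg _)))⟩
  refine le_of_forall_pos_le_add fun ε hε => ?_
  obtain ⟨b, hb, hyb⟩ := happrox ε hε
  linarith [isMinOn_iff.1 hmin b hb]

theorem eq_top_of_unitBall_subset {V : Submodule ℝ X} (hV : ∀ y, q y ≤ 1 → y ∈ V) : V = ⊤ := by
  refine Submodule.eq_top_iff'.2 fun x => ?_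
  have hpos : 0 < q x + 1 := by linarith [hq.nonneg x]
  have hmem : (q x + 1)⁻¹ • x ∈ V := hV _ (by
    rw [hq.smul_of_nonneg _ _ (inv_nonneg.2 hpos.le), inv_mul_le_iff₀ hpos]
    linarith)
  simpa [smul_smul, hpos.ne'] using V.smul_mem (q x + 1) hmem

theorem finiteDimensional_of_isCompact [t : TopologicalSpace X] (ht : t = ballTopology q)
    (hdef : ∀ x, q x = 0 → x = 0) (hcpt : IsCompact {x : X | q x ≤ 1}) :
    FiniteDimensional ℝ X := by
  obtain ⟨F, hF⟩ := hcpt.elim_finite_subcover (fun c => {y | q (y - c) < 1 / 2})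
    (fun c => ht ▸ isOpen_ball_ballTopology q c (by norm_num))
    (fun x _ => Set.mem_iUnion.2 ⟨x, by simp [hq.map_zero]⟩)
  have hcover : ∀ y, q y ≤ 1 → ∃ i : F, q (y - i) < 1 / 2 := fun y hy => by
    simpa using hF hy
  set L := Fintype.linearCombination ℝ ((↑) : F → X)
  have hball : ∀ y, q y ≤ 1 → y ∈ LinearMap.range L := fun y hy => by
    obtain ⟨a, -, rfl⟩ := hq.exists_eq_of_forall_exists_sub_lt hdef L
      (isCompact_closedBall 0 2) fun ε hε => by
        obtain ⟨n, hn⟩ := exists_pow_lt_of_lt_one hε (by norm_num : (1 / 2 : ℝ) < 1)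
        obtain ⟨a, ha, hya⟩ := hq.exists_sub_linearCombination_le_of_cover _ hcover n y hy
        exact ⟨a, by simpa using ha, hya.trans_lt hn⟩
    exact LinearMap.mem_range_self L a
  exact Module.Finite.of_surjective L
    (LinearMap.range_eq_top.1 (hq.eq_top_of_unitBall_subset hball))

end IsAsymmSeminorm

end

theorem stmt_9_general {X : Type*} [AddCommGroup X] [Module ℝ X]
    (q : X → ℝ)
    (hnn : ∀ x, 0 ≤ q x)
    (hhom : ∀ (a : ℝ) (x : X), 0 ≤ a → q (a • x) = a * q x)
    (htri : ∀ x y, q (x + y) ≤ q x + q y)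
    [t : TopologicalSpace X]
    (ht : t = TopologicalSpace.generateFrom
      {s : Set X | ∃ (c : X) (ε : ℝ), 0 < ε ∧ s = {y | q (y - c) < ε}})
    (hT1 : T1Space X)
    (hcpt : IsCompact {x : X | q x ≤ 1}) :
    (∃ r : ℝ, ∀ x : X, q x ≤ 1 → max (q x) (q (-x)) ≤ r) ∧
    (t = TopologicalSpace.generateFrom
      {s : Set X | ∃ (c : X) (ε : ℝ), 0 < ε ∧
        s = {y | max (q (y - c)) (q (-(y - c))) < ε}}) ∧
    FiniteDimensional ℝ X := by
  have hq : IsAsymmSeminorm q := ⟨hnn, hhom, htri⟩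
  have hdef : ∀ x, q x = 0 → x = 0 := fun x => hq.eq_zero_of_t1Space ht
  have hfin : FiniteDimensional ℝ X := hq.finiteDimensional_of_isCompact ht hdef hcpt
  obtain ⟨C, hC, hsymm⟩ := hq.exists_symmetrization_le_mul hdef
  refine ⟨⟨C, fun x hx => (hsymm x).trans (mul_le_of_le_one_right hC.le hx)⟩, ?_, hfin⟩
  rw [ht]
  exact le_antisymm
    (ballTopology_le_of_le_mul (isAsymmSeminorm_symmetrization hq) hq hC hsymm)
    (ballTopology_le_of_le_mul hq (isAsymmSeminorm_symmetrization hq) one_pos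
      fun x => (one_mul (symmetrization q x)).symm ▸ le_max_left _ _)

theorem stmt_9 {X : Type*} [AddCommGroup X] [Module ℝ X]
    (q : X → ℝ)
    (hnn : ∀ x, 0 ≤ q x)
    (hhom : ∀ (a : ℝ) (x : X), 0 ≤ a → q (a • x) = a * q x)
    (htri : ∀ x y, q (x + y) ≤ q x + q y)
    (hsep : ∀ x, q x = 0 → q (-x) = 0 → x = 0)
    [t : TopologicalSpace X]
    (ht : t = TopologicalSpace.generateFrom
      {s : Set X | ∃ (c : X) (ε : ℝ), 0 < ε ∧ s = {y | q (y - c) < ε}})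
    (hT1 : T1Space X)
    (hcpt : IsCompact {x : X | q x ≤ 1}) :
    (∃ r : ℝ, ∀ x : X, q x ≤ 1 → max (q x) (q (-x)) ≤ r) ∧
    (t = TopologicalSpace.generateFrom
      {s : Set X | ∃ (c : X) (ε : ℝ), 0 < ε ∧
        s = {y | max (q (y - c)) (q (-(y - c))) < ε}}) ∧
    FiniteDimensional ℝ X :=
  stmt_9_general q hnn hhom htri (t := t) ht hT1 hcpt
end

section
/- Let (X,q) be an asymmetric normed space and Y a linear subspace such that the quotient X/Y with the seminorm w_Y is Hausdorff. Then ker‖·‖_q = {x : ‖x‖_q = 0} ⊆ Y, where ‖x‖_q = inf{q(y)+q(y−x) : y ∈ X}. -/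
/-!
If `‖x‖_q = 0`, there are points `y` with both `q y` and `q (y - x)` arbitrarily small. Since
`w_Y` is dominated by `q` on representatives, the class of `y` then lies in every `w_Y`-ball
around `0` and in every `w_Y`-ball around `x + Y`, so these two classes cannot be separated by open
sets. As `X/Y` is Hausdorff, `x + Y = 0`, i.e. `x ∈ Y`.
-/

section BallTopology

variable {G : Type*} [AddGroup G] (w : G → ℝ)

def forwardBalls : Set (Set G) :=
  {s | ∃ (c : G) (ε : ℝ), 0 < ε ∧ s = {u | w (u - c) < ε}}

variable {w}

theorem exists_ball_subset_of_mem_ball (hw : ∀ a b, w (a + b) ≤ w a + w b) {c p : G} {ε : ℝ}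
    (hp : w (p - c) < ε) : ∃ δ > 0, {u | w (u - p) < δ} ⊆ {u | w (u - c) < ε} := by
  refine ⟨ε - w (p - c), by linarith, fun u hu => ?_⟩
  have := hw (u - p) (p - c)
  rw [sub_add_sub_cancel] at this
  simp only [Set.mem_ofPred_eq] at hu ⊢
  linarith

theorem exists_ball_subset_of_generateOpen (hw : ∀ a b, w (a + b) ≤ w a + w b) {U : Set G}
    (hU : TopologicalSpace.GenerateOpen (forwardBalls w) U) :
    ∀ p ∈ U, ∃ δ > 0, {u | w (u - p) < δ} ⊆ U := by
  induction hU with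
  | basic s hs =>
    obtain ⟨c, ε, -, rfl⟩ := hs
    exact fun p hp => exists_ball_subset_of_mem_ball hw hp
  | univ => exact fun p _ => ⟨1, one_pos, Set.subset_univ _⟩
  | inter U V _ _ ihU ihV =>
    intro p ⟨hpU, hpV⟩
    obtain ⟨δ₁, hδ₁, hU⟩ := ihU p hpU
    obtain ⟨δ₂, hδ₂, hV⟩ := ihV p hpV
    refine ⟨min δ₁ δ₂, lt_min hδ₁ hδ₂, fun u (hu : w (u - p) < _) =>
      ⟨hU ?_, hV ?_⟩⟩
    · exact hu.trans_le (min_le_left _ _)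
    · exact hu.trans_le (min_le_right _ _)
  | sUnion 𝒮 _ ih =>
    rintro p ⟨s, hs, hps⟩
    obtain ⟨δ, hδ, hsub⟩ := ih s hs p hps
    exact ⟨δ, hδ, hsub.trans (Set.subset_sUnion_of_mem hs)⟩

theorem exists_disjoint_balls_of_ne (hw : ∀ a b, w (a + b) ≤ w a + w b)
    (hT2 : @T2Space G (TopologicalSpace.generateFrom (forwardBalls w))) {p r : G} (hpr : p ≠ r) :
    ∃ δ > 0, ∀ u, w (u - p) < δ → δ ≤ w (u - r) := by
  let _ := TopologicalSpace.generateFrom (forwardBalls w)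
  obtain ⟨U, V, hU, hV, hpU, hrV, hUV⟩ := t2_separation hpr
  obtain ⟨δ₁, hδ₁, hballU⟩ := exists_ball_subset_of_generateOpen hw hU p hpU
  obtain ⟨δ₂, hδ₂, hballV⟩ := exists_ball_subset_of_generateOpen hw hV r hrV
  refine ⟨min δ₁ δ₂, lt_min hδ₁ hδ₂, fun u hup => ?_⟩
  by_contra! hur
  exact Set.disjoint_left.mp hUV (hballU (hup.trans_le (min_le_left _ _)))
    (hballV (hur.trans_le (min_le_right _ _)))

end BallTopology

section QuotientSeminorm

variable {R X : Type*} [Ring R] [AddCommGroup X] [Module R X] {q : X → ℝ} {Y : Submodule R X}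
  {w : X ⧸ Y → ℝ}

theorem bddBelow_range_add (hnn : ∀ x, 0 ≤ q x) (x : X) :
    BddBelow (Set.range fun y : Y => q (x + y)) :=
  ⟨0, Set.forall_mem_range.2 fun _ => hnn _⟩

theorem quotient_mk_le (hnn : ∀ x, 0 ≤ q x)
    (hw : ∀ x : X, w (Submodule.Quotient.mk x) = ⨅ y : Y, q (x + y))
    (x : X) : w (Submodule.Quotient.mk x) ≤ q x := by
  rw [hw]
  simpa using ciInf_le (bddBelow_range_add hnn x) 0

theorem quotient_add_le (hnn : ∀ x, 0 ≤ q x) (htri : ∀ x y, q (x + y) ≤ q x + q y)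
    (hw : ∀ x : X, w (Submodule.Quotient.mk x) = ⨅ y : Y, q (x + y)) (A B : X ⧸ Y) :
    w (A + B) ≤ w A + w B := by
  obtain ⟨a, rfl⟩ := Submodule.Quotient.mk_surjective Y A
  obtain ⟨b, rfl⟩ := Submodule.Quotient.mk_surjective Y B
  rw [← Submodule.Quotient.mk_add, hw, hw, hw]
  refine le_ciInf_add_ciInf fun y₁ y₂ => ?_
  calc ⨅ y : Y, q (a + b + y) ≤ q (a + b + (y₁ + y₂)) :=
        ciInf_le (bddBelow_range_add hnn _) (y₁ + y₂)
    _ = q ((a + y₁) + (b + y₂)) := by congr 1; abel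
    _ ≤ q (a + y₁) + q (b + y₂) := htri _ _

end QuotientSeminorm

theorem stmt_13_general {X : Type*} [AddCommGroup X] [Module ℝ X]
    (q : X → ℝ)
    (hnn : ∀ x, 0 ≤ q x)
    (htri : ∀ x y, q (x + y) ≤ q x + q y)
    (Y : Submodule ℝ X)
    (w : (X ⧸ Y) → ℝ)
    (hw : ∀ x : X, w (Submodule.Quotient.mk x) = ⨅ y : Y, q (x + y))
    [tq : TopologicalSpace (X ⧸ Y)]
    (htq : tq = TopologicalSpace.generateFrom
      {s : Set (X ⧸ Y) | ∃ (c : X ⧸ Y) (ε : ℝ), 0 < ε ∧ s = {u | w (u - c) < ε}})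
    (hT2 : @T2Space (X ⧸ Y) tq) :
    {x : X | (⨅ y : X, (q y + q (y - x))) = 0} ⊆ (Y : Set X) := by
  intro x hx
  subst htq
  by_contra hxY
  have hne : (0 : X ⧸ Y) ≠ Submodule.Quotient.mk x :=
    Ne.symm (mt (Submodule.Quotient.mk_eq_zero Y).mp hxY)
  obtain ⟨δ, hδ, hsep⟩ := exists_disjoint_balls_of_ne (quotient_add_le hnn htri hw) hT2 hne
  obtain ⟨y, hy⟩ : ∃ y, q y + q (y - x) < δ := exists_lt_of_ciInf_lt (hx.symm ▸ hδ)
  have hy0 : w (Submodule.Quotient.mk y - 0) < δ := by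
    rw [sub_zero]
    linarith [quotient_mk_le hnn hw y, hnn (y - x)]
  have hyx := hsep _ hy0
  rw [← Submodule.Quotient.mk_sub] at hyx
  linarith [quotient_mk_le hnn hw (y - x), hnn y]

theorem stmt_13 {X : Type*} [AddCommGroup X] [Module ℝ X]
    (q : X → ℝ)
    (hnn : ∀ x, 0 ≤ q x)
    (hhom : ∀ (a : ℝ) (x : X), 0 ≤ a → q (a • x) = a * q x)
    (htri : ∀ x y, q (x + y) ≤ q x + q y)
    (hsep : ∀ x, q x = 0 → q (-x) = 0 → x = 0)
    [t : TopologicalSpace X]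
    (ht : t = TopologicalSpace.generateFrom
      {s : Set X | ∃ (c : X) (ε : ℝ), 0 < ε ∧ s = {y | q (y - c) < ε}})
    (Y : Submodule ℝ X)
    (w : (X ⧸ Y) → ℝ)
    (hw : ∀ x : X, w (Submodule.Quotient.mk x) = ⨅ y : Y, q (x + y))
    [tq : TopologicalSpace (X ⧸ Y)]
    (htq : tq = TopologicalSpace.generateFrom
      {s : Set (X ⧸ Y) | ∃ (c : X ⧸ Y) (ε : ℝ), 0 < ε ∧ s = {u | w (u - c) < ε}})
    (hT2 : @T2Space (X ⧸ Y) tq) :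
    {x : X | (⨅ y : X, (q y + q (y - x))) = 0} ⊆ (Y : Set X) :=
  stmt_13_general q hnn htri Y w hw (tq := tq) htq hT2
end

section
/- Let (X,q) be an asymmetric normed space such that there exist x ∈ X and ε > 0 with B_q(x,ε) ⊆ θ_q = {z : q(z) = 0}. Then every finite open cover of X (in the topology induced by q) contains X itself as one of its members. -/
/-!
Every `q`-open set `U` is saturated under `θ_q`: if `u ∈ U` and `q (w - u) = 0` then `w ∈ U`,
by the triangle inequality. If the ball `B_q(x, ε)` lies in `θ_q`, then for every `z` the cone
`θ_q` contains `n • x + z` for all large `n`. Were no member of the finite cover all of `X`, pick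
`z_U ∉ U` for each member `U`, and `n` so large that every `n • x + z_U` lies in `θ_q`; the point
`-n • x` lies in some member `U`, and `z_U - (-n • x) ∈ θ_q` forces `z_U ∈ U`.
-/

open Filter

section AsymmetricNorm

variable {X : Type*} [AddCommGroup X] {q : X → ℝ}

abbrev openBalls (q : X → ℝ) : Set (Set X) :=
  {s | ∃ (c : X) (ε : ℝ), 0 < ε ∧ s = {y | q (y - c) < ε}}

lemma GenerateOpen.mem_of_sub_eq_zero (htri : ∀ x y, q (x + y) ≤ q x + q y) {U : Set X}
    (hU : TopologicalSpace.GenerateOpen (openBalls q) U) {u w : X} (hu : u ∈ U)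
    (hw : q (w - u) = 0) : w ∈ U := by
  induction hU with
  | basic s hs =>
    obtain ⟨c, δ, -, rfl⟩ := hs
    calc q (w - c) = q ((w - u) + (u - c)) := by rw [sub_add_sub_cancel]
      _ ≤ q (w - u) + q (u - c) := htri _ _
      _ < δ := by rw [hw, zero_add]; exact hu
  | univ => trivial
  | inter s t _ _ ihs iht => exact ⟨ihs hu.1, iht hu.2⟩
  | sUnion S _ ih =>
    obtain ⟨s, hsS, hus⟩ := hu
    exact ⟨s, hsS, ih s hsS hus⟩

lemma apply_add_eq_zero (hnn : ∀ x, 0 ≤ q x) (htri : ∀ x y, q (x + y) ≤ q x + q y) {a b : X}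
    (ha : q a = 0) (hb : q b = 0) : q (a + b) = 0 :=
  le_antisymm (by simpa [ha, hb] using htri a b) (hnn _)

variable [Module ℝ X]

lemma apply_zero_of_homogeneous (hhom : ∀ (a : ℝ) (x : X), 0 ≤ a → q (a • x) = a * q x) :
    q 0 = 0 := by
  simpa using hhom 0 0 le_rfl

lemma exists_pos_smul_add_eq_zero (hnn : ∀ x, 0 ≤ q x)
    (hhom : ∀ (a : ℝ) (x : X), 0 ≤ a → q (a • x) = a * q x)
    {x : X} {ε : ℝ} (hε : 0 < ε) (hball : {y : X | q (y - x) < ε} ⊆ {z : X | q z = 0}) (z : X) :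
    ∃ m : ℝ, q (m • x + z) = 0 := by
  have hd : 0 < q z + 1 := by linarith [hnn z]
  set s := ε / (q z + 1)
  have hs : 0 < s := div_pos hε hd
  -- `x + s • z` lies in the ball; rescaling by `s⁻¹` keeps it in the cone `θ_q`.
  have hxz : q (x + s • z) = 0 := hball <| by
    change q (x + s • z - x) < ε
    rw [add_sub_cancel_left, hhom s z hs.le, div_mul_eq_mul_div, div_lt_iff₀ hd]
    nlinarith
  refine ⟨s⁻¹, ?_⟩
  rw [← inv_smul_smul₀ hs.ne' z, ← smul_add, hhom _ _ (inv_nonneg.2 hs.le), hxz, mul_zero]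

lemma eventually_smul_add_eq_zero (hnn : ∀ x, 0 ≤ q x)
    (hhom : ∀ (a : ℝ) (x : X), 0 ≤ a → q (a • x) = a * q x)
    (htri : ∀ x y, q (x + y) ≤ q x + q y)
    {x : X} {ε : ℝ} (hε : 0 < ε) (hball : {y : X | q (y - x) < ε} ⊆ {z : X | q z = 0}) (z : X) :
    ∀ᶠ n : ℝ in atTop, q (n • x + z) = 0 := by
  have hx : q x = 0 := hball (by simpa [apply_zero_of_homogeneous hhom] using hε)
  obtain ⟨m, hm⟩ := exists_pos_smul_add_eq_zero hnn hhom hε hball z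
  filter_upwards [eventually_ge_atTop m] with n hn
  have hsplit : n • x + z = (n - m) • x + (m • x + z) := by rw [sub_smul]; abel
  rw [hsplit]
  exact apply_add_eq_zero hnn htri (by rw [hhom _ _ (sub_nonneg.2 hn), hx, mul_zero]) hm

end AsymmetricNorm

theorem stmt_16_general {X : Type*} [AddCommGroup X] [Module ℝ X]
    (q : X → ℝ)
    (hnn : ∀ x, 0 ≤ q x)
    (hhom : ∀ (a : ℝ) (x : X), 0 ≤ a → q (a • x) = a * q x)
    (htri : ∀ x y, q (x + y) ≤ q x + q y)
    [t : TopologicalSpace X]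
    (ht : t = TopologicalSpace.generateFrom
      {s : Set X | ∃ (c : X) (ε : ℝ), 0 < ε ∧ s = {y | q (y - c) < ε}})
    (x : X) (ε : ℝ) (hε : 0 < ε)
    (hball : {y : X | q (y - x) < ε} ⊆ {z : X | q z = 0})
    (𝒰 : Finset (Set X))
    (hopen : ∀ U ∈ 𝒰, IsOpen U)
    (hcover : ⋃₀ (𝒰 : Set (Set X)) = Set.univ) :
    (Set.univ : Set X) ∈ 𝒰 := by
  subst ht
  by_contra hnot
  have hmiss : ∀ U ∈ 𝒰, ∃ z, z ∉ U := fun U hU => by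
    by_contra! h
    exact hnot (Set.eq_univ_of_forall h ▸ hU)
  choose! z hz using hmiss
  obtain ⟨n, hn⟩ := ((eventually_all_finset 𝒰).2 fun U _ =>
    eventually_smul_add_eq_zero hnn hhom htri hε hball (z U)).exists
  obtain ⟨U, hU, hnU⟩ : (-n) • x ∈ ⋃₀ (𝒰 : Set (Set X)) := hcover ▸ Set.mem_univ _
  refine hz U hU (GenerateOpen.mem_of_sub_eq_zero htri (hopen U hU) hnU ?_)
  rw [neg_smul, sub_neg_eq_add, add_comm]
  exact hn U hU

theorem stmt_16 {X : Type*} [AddCommGroup X] [Module ℝ X]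
    (q : X → ℝ)
    (hnn : ∀ x, 0 ≤ q x)
    (hhom : ∀ (a : ℝ) (x : X), 0 ≤ a → q (a • x) = a * q x)
    (htri : ∀ x y, q (x + y) ≤ q x + q y)
    (hsep : ∀ x, q x = 0 → q (-x) = 0 → x = 0)
    [t : TopologicalSpace X]
    (ht : t = TopologicalSpace.generateFrom
      {s : Set X | ∃ (c : X) (ε : ℝ), 0 < ε ∧ s = {y | q (y - c) < ε}})
    (x : X) (ε : ℝ) (hε : 0 < ε)
    (hball : {y : X | q (y - x) < ε} ⊆ {z : X | q z = 0})
    (𝒰 : Finset (Set X))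
    (hopen : ∀ U ∈ 𝒰, IsOpen U)
    (hcover : ⋃₀ (𝒰 : Set (Set X)) = Set.univ) :
    (Set.univ : Set X) ∈ 𝒰 :=
  stmt_16_general q hnn hhom htri (t := t) ht x ε hε hball 𝒰 hopen hcover
end
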